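/- A Hermitian 4×4 complex matrix ρ satisfies Tr(ρ·(σ_i⊗σ_j)) = 0 for all i ≠ j in {0,1,2,3} (i.e., its R-matrix is diagonal) if and only if ρ is diagonal in the Bell basis, i.e., ρ = Σ_{k=1}^{4} c_k |B_k⟩⟨B_k| for some real numbers c_k, where B₁ = (e₀₀+e₁₁)/√2, B₂ = (e₀₀−e₁₁)/√2, B₃ = (e₀₁+e₁₀)/√2, B₄ = (e₀₁−e₁₀)/√2. -/

import Mathlib

open Matrix Kronecker

noncomputable section

/-- The Pauli matrices σ₀ = I, σ₁, σ₂, σ₃. -/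
def pauli : Fin 4 → Matrix (Fin 2) (Fin 2) ℂ :=
  ![1, !![0, 1; 1, 0], !![0, -Complex.I; Complex.I, 0], !![1, 0; 0, -1]]

/-- The standard basis vector of ℂ²⊗ℂ² supported at `(i, j)`. -/
def e2 (i j : Fin 2) : Fin 2 × Fin 2 → ℂ :=
  fun p => if p = (i, j) then 1 else 0

/-- The four Bell states. -/
def Bell : Fin 4 → (Fin 2 × Fin 2 → ℂ) :=
  ![((Real.sqrt 2 : ℂ))⁻¹ • (e2 0 0 + e2 1 1),
    ((Real.sqrt 2 : ℂ))⁻¹ • (e2 0 0 - e2 1 1),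
    ((Real.sqrt 2 : ℂ))⁻¹ • (e2 0 1 + e2 1 0),
    ((Real.sqrt 2 : ℂ))⁻¹ • (e2 0 1 - e2 1 0)]

set_option maxHeartbeats 2000000 in
theorem R_diagonal_iff_bell_diagonal
    (ρ : Matrix (Fin 2 × Fin 2) (Fin 2 × Fin 2) ℂ) (hρ : ρ.IsHermitian) :
    (∀ i j : Fin 4, i ≠ j → (ρ * (pauli i ⊗ₖ pauli j)).trace = 0) ↔
      ∃ c : Fin 4 → ℝ,
        ρ = ∑ k : Fin 4, (c k : ℂ) • Matrix.vecMulVec (Bell k) (star (Bell k)) := by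
  have key : ((Real.sqrt 2 : ℂ))⁻¹ * ((Real.sqrt 2 : ℂ))⁻¹ = 1/2 := by
    rw [← mul_inv, ← Complex.ofReal_mul, Real.mul_self_sqrt (by norm_num)]
    norm_num
  constructor
  · intro h
    have h01 := h 0 1 (by decide); have h02 := h 0 2 (by decide); have h03 := h 0 3 (by decide)
    have h10 := h 1 0 (by decide); have h12 := h 1 2 (by decide); have h13 := h 1 3 (by decide)
    have h20 := h 2 0 (by decide); have h21 := h 2 1 (by decide); have h23 := h 2 3 (by decide)
    have h30 := h 3 0 (by decide); have h31 := h 3 1 (by decide); have h32 := h 3 2 (by decide)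
    have hp0 : pauli 0 = 1 := rfl
    have hp1 : pauli 1 = !![0, 1; 1, 0] := rfl
    have hp2 : pauli 2 = !![0, -Complex.I; Complex.I, 0] := rfl
    have hp3 : pauli 3 = !![1, 0; 0, -1] := rfl
    simp only [Matrix.trace, Matrix.diag, Matrix.mul_apply, Fintype.sum_prod_type,
      Fin.sum_univ_two, Matrix.kroneckerMap_apply, hp0, hp1, hp2, hp3]
      at h01 h02 h03 h10 h12 h13 h20 h21 h23 h30 h31 h32
    norm_num [Matrix.one_apply] at h01 h02 h03 h10 h12 h13 h20 h21 h23 h30 h31 h32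
    -- hermitian star relations
    have hs : ∀ p q, ρ p q = star (ρ q p) := fun p q => (hρ.apply p q).symm
    -- diagonal entries real
    have r1 : ρ (0,0) (0,0) = ((ρ (0,0) (0,0)).re : ℂ) :=
      (Complex.conj_eq_iff_re.mp (hs (0,0) (0,0)).symm).symm
    have r2 : ρ (0,1) (0,1) = ((ρ (0,1) (0,1)).re : ℂ) :=
      (Complex.conj_eq_iff_re.mp (hs (0,1) (0,1)).symm).symm
    -- anti-diagonal equalities
    have hI : Complex.I * Complex.I = -1 := Complex.I_mul_I
    have eq1 : ρ (0,0) (1,1) = ρ (1,1) (0,0) := by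
      linear_combination (-Complex.I/2) * h12 + (-Complex.I/2) * h21 +
        (ρ (0,0) (1,1) - ρ (1,1) (0,0)) * hI
    have eq2 : ρ (0,1) (1,0) = ρ (1,0) (0,1) := by
      linear_combination (Complex.I/2) * h12 + (-Complex.I/2) * h21 +
        (ρ (0,1) (1,0) - ρ (1,0) (0,1)) * hI
    have ra1 : ρ (0,0) (1,1) = ((ρ (0,0) (1,1)).re : ℂ) := by
      refine (Complex.conj_eq_iff_re.mp ?_).symm
      rw [← Complex.star_def, ← hs (1,1) (0,0), ← eq1]
    have ra2 : ρ (0,1) (1,0) = ((ρ (0,1) (1,0)).re : ℂ) := by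
      refine (Complex.conj_eq_iff_re.mp ?_).symm
      rw [← Complex.star_def, ← hs (1,0) (0,1), ← eq2]
    refine ⟨![(ρ (0,0) (0,0)).re + (ρ (0,0) (1,1)).re,
              (ρ (0,0) (0,0)).re - (ρ (0,0) (1,1)).re,
              (ρ (0,1) (0,1)).re + (ρ (0,1) (1,0)).re,
              (ρ (0,1) (0,1)).re - (ρ (0,1) (1,0)).re], ?_⟩
    ext ⟨p1, p2⟩ ⟨q1, q2⟩
    fin_cases p1 <;> fin_cases p2 <;> fin_cases q1 <;> fin_cases q2 <;>
      simp only [Matrix.sum_apply, Matrix.smul_apply, Matrix.vecMulVec_apply, Bell,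
        Fin.sum_univ_four, Pi.star_apply, Pi.smul_apply, Pi.add_apply, Pi.sub_apply,
        smul_eq_mul, Matrix.cons_val_zero, Matrix.cons_val_one, Matrix.head_cons,
        Matrix.cons_val_two, Matrix.cons_val_three, Matrix.tail_cons] <;>
      norm_num [Matrix.vecHead, Matrix.vecTail, e2, Prod.ext_iff, star_mul',
        Complex.star_def, Complex.conj_ofReal, map_inv₀, key] <;>
      push_cast
    · linear_combination r1
    · linear_combination (h01 + h31)/4 + (-Complex.I/4)*(h02 + h32) + ((ρ (0,0) (0,1) - ρ (0,1) (0,0))/2) * hI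
    · linear_combination (h10 + h13)/4 + (-Complex.I/4)*(h20 + h23) + ((ρ (0,0) (1,0) - ρ (1,0) (0,0))/2) * hI
    · linear_combination ra1
    · linear_combination (h01 + h31)/4 + (Complex.I/4)*(h02 + h32) + ((ρ (0,1) (0,0) - ρ (0,0) (0,1))/2) * hI
    · linear_combination r2
    · linear_combination ra2
    · linear_combination (h10 - h13)/4 + (-Complex.I/4)*(h20 - h23) + ((ρ (0,1) (1,1) - ρ (1,1) (0,1))/2) * hI
    · linear_combination (h10 + h13)/4 + (Complex.I/4)*(h20 + h23) + ((ρ (1,0) (0,0) - ρ (0,0) (1,0))/2) * hI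
    · linear_combination -eq2 + ra2
    · linear_combination (h03 - h30)/2 + r2
    · linear_combination (h01 - h31)/4 + (-Complex.I/4)*(h02 - h32) + ((ρ (1,0) (1,1) - ρ (1,1) (1,0))/2) * hI
    · linear_combination -eq1 + ra1
    · linear_combination (h10 - h13)/4 + (Complex.I/4)*(h20 - h23) + ((ρ (1,1) (0,1) - ρ (0,1) (1,1))/2) * hI
    · linear_combination (h01 - h31)/4 + (Complex.I/4)*(h02 - h32) + ((ρ (1,1) (1,0) - ρ (1,0) (1,1))/2) * hI
    · linear_combination -(h03 + h30)/2 + r1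
  · rintro ⟨c, rfl⟩ i j hij
    fin_cases i <;> fin_cases j <;>
      first
      | exact absurd rfl hij
      | (norm_num [Matrix.trace, Matrix.diag, Matrix.mul_apply, Fintype.sum_prod_type,
          Fin.sum_univ_two, Matrix.kroneckerMap_apply, pauli, Matrix.sum_apply,
          Matrix.smul_apply, Matrix.vecMulVec_apply, Bell, Fin.sum_univ_four,
          Pi.star_apply, Pi.smul_apply, Pi.add_apply, Pi.sub_apply, smul_eq_mul,
          Matrix.cons_val_zero, Matrix.cons_val_one, Matrix.head_cons,
          Matrix.cons_val_two, Matrix.cons_val_three, Matrix.tail_cons,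
          Matrix.one_apply, Matrix.vecHead, Matrix.vecTail, e2, Prod.ext_iff,
          star_mul', Complex.star_def, Complex.conj_ofReal, map_inv₀, key]
         try ring)
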